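/- arXiv:2203.04143 — 2 statements merged into one kernel-verified Lean document; each statement's English description precedes it below -/
import Mathlib

section
/- Let κ > 0 and ρ(x) = sech²(κx). If 0 < C ≤ 2κ², then for every odd function v ∈ H¹(ℝ), ∫_ℝ (v')² dx ≥ C ∫_ℝ ρ v² dx. -/
/-!
`φ(x) = tanh(κx)` solves `-φ'' = 2κ² sech²(κx) φ` and vanishes only at `0`, so its logarithmic
derivative `g = φ'/φ = κ / (sinh(κx) cosh(κx))` satisfies the Riccati equation
`g' = -g² - 2κ² sech²(κx)` away from `0`. Completing the square gives
`v'² - 2κ² sech²(κx) v² = (v' - g v)² + (g v²)'`.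
Since `v(0) = 0`, `g v²` extends continuously by `0` across the singularity of `g`, and it has
the sign of `x`; integrating over `[-b, b]` gives a nonnegative quantity, and `b → ∞` concludes.
-/

open Real MeasureTheory Set Filter Topology Asymptotics

/-- At `x = 0` the division by zero returns `0`, which makes `x ↦ logDerivTanh κ x * v x ^ 2`
continuous whenever `v 0 = 0`. -/
noncomputable def logDerivTanh (κ x : ℝ) : ℝ := κ / (sinh (κ * x) * cosh (κ * x))

theorem hasDerivAt_logDerivTanh {κ x : ℝ} (hx : κ * x ≠ 0) :
    HasDerivAt (logDerivTanh κ)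
      (-logDerivTanh κ x ^ 2 - 2 * κ ^ 2 * (1 / cosh (κ * x)) ^ 2) x := by
  have hκx : HasDerivAt (fun y => κ * y) κ x := by
    simpa using (hasDerivAt_id x).const_mul κ
  have hs := sinh_ne_zero.2 hx
  have hc := (cosh_pos (κ * x)).ne'
  refine ((hasDerivAt_const x κ).fun_div (hκx.sinh.fun_mul hκx.cosh)
    (mul_ne_zero hs hc)).congr_deriv ?_
  rw [logDerivTanh]
  field_simp
  linear_combination (-κ ^ 2) * cosh_sq_sub_sinh_sq (κ * x)

theorem abs_logDerivTanh_mul_le_one (κ x : ℝ) : |logDerivTanh κ x * x| ≤ 1 := by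
  rw [logDerivTanh, div_mul_eq_mul_div, abs_div, abs_mul (sinh _)]
  refine div_le_one_of_le₀ ?_ (by positivity)
  calc |κ * x| ≤ |sinh (κ * x)| := by rw [abs_sinh]; exact self_le_sinh_iff.2 (abs_nonneg _)
    _ ≤ |sinh (κ * x)| * |cosh (κ * x)| := by
      rw [abs_of_pos (cosh_pos _)]; exact le_mul_of_one_le_right (abs_nonneg _) (one_le_cosh _)

theorem logDerivTanh_nonneg {κ x : ℝ} (hκ : 0 ≤ κ) (hx : 0 ≤ x) : 0 ≤ logDerivTanh κ x :=
  div_nonneg hκ (mul_nonneg (sinh_nonneg_iff.2 (mul_nonneg hκ hx)) (cosh_pos _).le)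

theorem logDerivTanh_nonpos {κ x : ℝ} (hκ : 0 ≤ κ) (hx : x ≤ 0) : logDerivTanh κ x ≤ 0 :=
  div_nonpos_of_nonneg_of_nonpos hκ
    (mul_nonpos_of_nonpos_of_nonneg (sinh_nonpos_iff.2 (mul_nonpos_of_nonneg_of_nonpos hκ hx))
      (cosh_pos _).le)

theorem hasDerivAt_logDerivTanh_mul_sq {κ x : ℝ} {v : ℝ → ℝ} (hx : κ * x ≠ 0)
    (hv : DifferentiableAt ℝ v x) :
    HasDerivAt (fun y => logDerivTanh κ y * v y ^ 2)
      (deriv v x ^ 2 - 2 * κ ^ 2 * (1 / cosh (κ * x)) ^ 2 * v x ^ 2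
        - (deriv v x - logDerivTanh κ x * v x) ^ 2) x := by
  refine ((hasDerivAt_logDerivTanh hx).fun_mul (hv.hasDerivAt.fun_pow 2)).congr_deriv ?_
  ring

theorem tendsto_logDerivTanh_mul_sq {κ : ℝ} {v : ℝ → ℝ} (hv : DifferentiableAt ℝ v 0)
    (hv0 : v 0 = 0) : Tendsto (fun x => logDerivTanh κ x * v x ^ 2) (𝓝 0) (𝓝 0) := by
  have hv_bigO : v =O[𝓝 0] fun x => x := by simpa [hv0] using hv.hasDerivAt.isBigO_sub
  have hv_tendsto : Tendsto v (𝓝 0) (𝓝 0) := by simpa [hv0] using hv.continuousAt.tendsto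
  refine IsBigO.trans_tendsto ?_ hv_tendsto
  calc (fun x => logDerivTanh κ x * v x ^ 2)
      =O[𝓝 0] fun x => logDerivTanh κ x * (x * v x) := by
        simpa only [pow_two] using (isBigO_refl _ _).mul (hv_bigO.mul (isBigO_refl v _))
    _ =O[𝓝 0] v := isBigO_of_le _ fun x => by
        rw [← mul_assoc, norm_mul]
        exact mul_le_of_le_one_left (norm_nonneg _) (abs_logDerivTanh_mul_le_one κ x)

theorem continuous_logDerivTanh_mul_sq {κ : ℝ} (hκ : κ ≠ 0) {v : ℝ → ℝ} (hv : Differentiable ℝ v)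
    (hv0 : v 0 = 0) : Continuous fun x => logDerivTanh κ x * v x ^ 2 := by
  refine continuous_iff_continuousAt.2 fun x => ?_
  rcases eq_or_ne x 0 with rfl | hx
  · simpa [ContinuousAt, logDerivTanh, hv0] using tendsto_logDerivTanh_mul_sq (κ := κ) (hv 0) hv0
  · exact (hasDerivAt_logDerivTanh_mul_sq (mul_ne_zero hκ hx) (hv x)).continuousAt

theorem logDerivTanh_mul_sq_sub_le_integral {κ C a b : ℝ} {v : ℝ → ℝ} (hκ : κ ≠ 0)
    (hC : C ≤ 2 * κ ^ 2) (hv : Differentiable ℝ v) (hv0 : v 0 = 0) (hab : a ≤ b)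
    (h0 : 0 ∉ Ioo a b)
    (hf : IntegrableOn (fun x => deriv v x ^ 2 - C * ((1 / cosh (κ * x)) ^ 2 * v x ^ 2))
      (Icc a b)) :
    logDerivTanh κ b * v b ^ 2 - logDerivTanh κ a * v a ^ 2
      ≤ ∫ x in a..b, deriv v x ^ 2 - C * ((1 / cosh (κ * x)) ^ 2 * v x ^ 2) := by
  refine intervalIntegral.sub_le_integral_of_hasDeriv_right_of_le (g' := fun x =>
      deriv v x ^ 2 - 2 * κ ^ 2 * (1 / cosh (κ * x)) ^ 2 * v x ^ 2
        - (deriv v x - logDerivTanh κ x * v x) ^ 2) hab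
    (continuous_logDerivTanh_mul_sq hκ hv hv0).continuousOn (fun x hx => ?_) hf (fun x _ => ?_)
  · exact (hasDerivAt_logDerivTanh_mul_sq (mul_ne_zero hκ (ne_of_mem_of_not_mem hx h0))
      (hv x)).hasDerivWithinAt
  · have hρ : 0 ≤ (1 / cosh (κ * x)) ^ 2 * v x ^ 2 := by positivity
    linarith [mul_nonneg (sub_nonneg.2 hC) hρ, sq_nonneg (deriv v x - logDerivTanh κ x * v x)]

theorem integral_neg_self_deriv_sq_sub_sech_sq_nonneg {κ C b : ℝ} {v : ℝ → ℝ} (hκ : 0 < κ)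
    (hC : C ≤ 2 * κ ^ 2) (hv : Differentiable ℝ v) (hv0 : v 0 = 0) (hb : 0 ≤ b)
    (hf : Integrable (fun x => deriv v x ^ 2 - C * ((1 / cosh (κ * x)) ^ 2 * v x ^ 2))) :
    0 ≤ ∫ x in -b..b, deriv v x ^ 2 - C * ((1 / cosh (κ * x)) ^ 2 * v x ^ 2) := by
  have hleft := logDerivTanh_mul_sq_sub_le_integral hκ.ne' hC hv hv0 (neg_nonpos.2 hb)
    (fun h => lt_irrefl 0 h.2) hf.integrableOn
  have hright := logDerivTanh_mul_sq_sub_le_integral hκ.ne' hC hv hv0 hb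
    (fun h => lt_irrefl 0 h.1) hf.integrableOn
  rw [← intervalIntegral.integral_add_adjacent_intervals (b := 0) hf.intervalIntegrable
    hf.intervalIntegrable]
  have hneg := mul_nonpos_of_nonpos_of_nonneg (logDerivTanh_nonpos hκ.le (neg_nonpos.2 hb))
    (sq_nonneg (v (-b)))
  have hpos := mul_nonneg (logDerivTanh_nonneg hκ.le hb) (sq_nonneg (v b))
  rw [hv0] at hleft hright
  linarith

theorem odd_hardy_inequality_general (κ C : ℝ) (hκ : 0 < κ) (hC : C ≤ 2 * κ ^ 2)
    (v : ℝ → ℝ) (hv : Differentiable ℝ v)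
    (hodd : ∀ x, v (-x) = -v x)
    (hv2 : Integrable (fun x => (v x) ^ 2))
    (hdv2 : Integrable (fun x => (deriv v x) ^ 2)) :
    ∫ x, (deriv v x) ^ 2 ≥ C * ∫ x, (1 / Real.cosh (κ * x)) ^ 2 * (v x) ^ 2 := by
  have hv0 : v 0 = 0 := self_eq_neg.1 (by simpa using hodd 0)
  have hρ : Integrable fun x => (1 / cosh (κ * x)) ^ 2 * v x ^ 2 := by
    refine hv2.bdd_mul (c := 1) (Continuous.aestronglyMeasurable <|
      (continuous_const.div (by fun_prop) fun x => (cosh_pos _).ne').pow 2)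
      (ae_of_all _ fun x => ?_)
    rw [norm_pow, norm_div, norm_one, norm_of_nonneg (cosh_pos _).le]
    exact pow_le_one₀ (by positivity) (div_le_one_of_le₀ (one_le_cosh _) (cosh_pos _).le)
  have hf : Integrable fun x => deriv v x ^ 2 - C * ((1 / cosh (κ * x)) ^ 2 * v x ^ 2) :=
    hdv2.sub (hρ.const_mul C)
  have hnonneg := ge_of_tendsto (intervalIntegral_tendsto_integral hf tendsto_neg_atTop_atBot
    tendsto_id) ((eventually_ge_atTop 0).mono fun b hb =>
      integral_neg_self_deriv_sq_sub_sech_sq_nonneg hκ hC hv hv0 hb hf)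
  rw [integral_sub hdv2 (hρ.const_mul C), integral_const_mul] at hnonneg
  linarith

/-- If 0 < C ≤ 2κ² and ρ(x) = sech²(κx), then ∫ (v')² ≥ C ∫ ρ v² for every odd v ∈ H¹(ℝ). -/
theorem odd_hardy_inequality (κ C : ℝ) (hκ : 0 < κ) (hC0 : 0 < C) (hC : C ≤ 2 * κ ^ 2)
    (v : ℝ → ℝ) (hv : Differentiable ℝ v)
    (hodd : ∀ x, v (-x) = -v x)
    (hv2 : Integrable (fun x => (v x) ^ 2))
    (hdv2 : Integrable (fun x => (deriv v x) ^ 2)) :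
    ∫ x, (deriv v x) ^ 2 ≥ C * ∫ x, (1 / Real.cosh (κ * x)) ^ 2 * (v x) ^ 2 :=
  odd_hardy_inequality_general κ C hκ hC v hv hodd hv2 hdv2
end

section
/- Suppose there exists γ ∈ (0,1) such that for every odd v ∈ H¹(ℝ), (1−γ)∫(v')² ≥ −(1/2)∫ x P₂'(x) v² dx, where P₂' is continuous with |P₂'(x)| ≤ C e^{−5·2κ|x|} (i.e., P₂' ∈ 𝒴). If additionally a continuous function Q satisfies |x·Q(x)| ≤ ε·sech⁴(κx) pointwise with ε ≤ γ·2κ²·(some explicit constant), then for every odd v ∈ H¹, (1−γ/2)∫(v')² ≥ −(1/2)∫ x(P₂'(x)+Q(x)) v² dx. -/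
/-!
`φ(x) = tanh (κx)` solves `-φ'' = 2κ² sech²(κx) φ` and vanishes only at `0`, so its logarithmic
derivative `W = 2κ / sinh (2κx)` satisfies the Riccati equation `W' + W² = -2κ² sech²(κx)`.
Hence `v'² - 2κ² sech²(κx) v² = (v' - W v)² + (W v²)'` away from `0`. Integrating over a half-line,
the boundary term `W v²` is nonnegative far out and tends to `0` at the origin when `v(0) = 0`,
which gives the Hardy-type bound `∫ v'² ≥ 2κ² ∫ sech²(κx) v²`. As `|x Q| ≤ ε sech⁴ ≤ 2γκ² sech²`,
the perturbation `Q` costs at most `(γ/2) ∫ v'²`, half of the margin in the hypothesis on `P₂'`.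
-/

open Real MeasureTheory Filter Topology Set

noncomputable def hardyWeight (κ x : ℝ) : ℝ := 2 * κ / sinh (2 * κ * x)

noncomputable def hardyDefect (κ : ℝ) (v : ℝ → ℝ) (x : ℝ) : ℝ :=
  deriv v x ^ 2 - 2 * κ ^ 2 * ((1 / cosh (κ * x)) ^ 2 * v x ^ 2)

lemma hasDerivAt_hardyWeight {κ x : ℝ} (hκ : κ ≠ 0) (hx : x ≠ 0) :
    HasDerivAt (hardyWeight κ)
      (-(hardyWeight κ x ^ 2 + 2 * κ ^ 2 * (1 / cosh (κ * x)) ^ 2)) x := by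
  have hsinh : sinh (2 * κ * x) ≠ 0 := sinh_ne_zero.mpr (by positivity)
  have hs : sinh (κ * x) ≠ 0 := sinh_ne_zero.mpr (mul_ne_zero hκ hx)
  have hc : cosh (κ * x) ≠ 0 := (cosh_pos _).ne'
  have hinner : HasDerivAt (fun y => 2 * κ * y) (2 * κ) x := by
    simpa using (hasDerivAt_id x).const_mul (2 * κ)
  refine ((hasDerivAt_const x (2 * κ)).div ((hasDerivAt_sinh _).comp x hinner) hsinh).congr_deriv ?_
  rw [Function.comp_apply, hardyWeight, show 2 * κ * x = 2 * (κ * x) by ring, sinh_two_mul,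
    cosh_two_mul]
  field_simp
  linear_combination (-2 * κ ^ 2) * cosh_sq_sub_sinh_sq (κ * x)

lemma hardyWeight_pos {κ x : ℝ} (hκ : 0 < κ) (hx : 0 < x) : 0 < hardyWeight κ x :=
  div_pos (by positivity) (sinh_pos_iff.mpr (by positivity))

lemma hardyWeight_le_inv {κ x : ℝ} (hκ : 0 < κ) (hx : 0 < x) : hardyWeight κ x ≤ x⁻¹ :=
  calc hardyWeight κ x ≤ 2 * κ / (2 * κ * x) :=
        div_le_div_of_nonneg_left (by positivity) (by positivity)
          (self_le_sinh_iff.mpr (by positivity))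
    _ = x⁻¹ := by field_simp

lemma tendsto_hardyWeight_mul_sq {κ : ℝ} {v : ℝ → ℝ} (hκ : 0 < κ) (hv : DifferentiableAt ℝ v 0)
    (hv0 : v 0 = 0) : Tendsto (fun x => hardyWeight κ x * v x ^ 2) (𝓝[>] 0) (𝓝 0) := by
  have hslope : Tendsto (fun x => v x / x) (𝓝[>] 0) (𝓝 (deriv v 0)) := by
    have h := hasDerivAt_iff_tendsto_slope.mp hv.hasDerivAt
    refine (h.mono_left (nhdsWithin_mono _ fun x hx => ne_of_gt hx)).congr fun x => ?_
    simp [slope_def_field, hv0]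
  have hval : Tendsto v (𝓝[>] 0) (𝓝 0) := by
    simpa [hv0] using hv.continuousAt.tendsto.mono_left nhdsWithin_le_nhds
  refine squeeze_zero' ?_ ?_ (by simpa using hslope.mul hval)
  · filter_upwards [self_mem_nhdsWithin] with x hx
    exact mul_nonneg (hardyWeight_pos hκ hx).le (sq_nonneg _)
  · filter_upwards [self_mem_nhdsWithin] with x (hx : 0 < x)
    calc hardyWeight κ x * v x ^ 2 ≤ x⁻¹ * v x ^ 2 :=
          mul_le_mul_of_nonneg_right (hardyWeight_le_inv hκ hx) (sq_nonneg _)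
      _ = v x / x * v x := by ring

lemma one_div_cosh_le_one (t : ℝ) : 1 / cosh t ≤ 1 :=
  (div_le_one (cosh_pos t)).mpr (one_le_cosh t)

lemma integrable_sech_sq_mul {κ : ℝ} {g : ℝ → ℝ} (hg : Integrable g) :
    Integrable fun x => (1 / cosh (κ * x)) ^ 2 * g x := by
  refine hg.bdd_mul (c := 1) ((continuous_const.div (by fun_prop)
    fun x => (cosh_pos _).ne').pow 2).aestronglyMeasurable (ae_of_all _ fun x => ?_)
  rw [norm_pow, norm_div, norm_one, Real.norm_of_nonneg (cosh_pos _).le]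
  exact pow_le_one₀ (by positivity) (one_div_cosh_le_one _)

section Hardy

variable {κ : ℝ} {v : ℝ → ℝ}

lemma sub_le_integral_hardyDefect (hκ : 0 < κ) (hv : Differentiable ℝ v) {a b : ℝ} (ha : 0 < a)
    (hab : a ≤ b) (hint : IntegrableOn (hardyDefect κ v) (Icc a b)) :
    hardyWeight κ b * v b ^ 2 - hardyWeight κ a * v a ^ 2 ≤ ∫ x in a..b, hardyDefect κ v x := by
  have hderiv : ∀ x ∈ Icc a b, HasDerivAt (fun y => hardyWeight κ y * v y ^ 2)
      (-(hardyWeight κ x ^ 2 + 2 * κ ^ 2 * (1 / cosh (κ * x)) ^ 2) * v x ^ 2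
        + hardyWeight κ x * (2 * v x * deriv v x)) x := fun x hx =>
    ((hasDerivAt_hardyWeight hκ.ne' (ha.trans_le hx.1).ne').mul
      ((hv x).hasDerivAt.pow 2)).congr_deriv (by simp)
  refine intervalIntegral.sub_le_integral_of_hasDeriv_right_of_le hab
    (fun x hx => (hderiv x hx).continuousAt.continuousWithinAt)
    (fun x hx => (hderiv x (Ioo_subset_Icc_self hx)).hasDerivWithinAt) hint fun x _ => ?_
  rw [hardyDefect]
  -- `hardyDefect κ v - (W v²)' = (v' - W v)²` by the Riccati equation for `W`
  nlinarith [sq_nonneg (deriv v x - hardyWeight κ x * v x)]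

lemma integral_Ioi_hardyDefect_nonneg (hκ : 0 < κ) (hv : Differentiable ℝ v) (hv0 : v 0 = 0)
    (hint : IntegrableOn (hardyDefect κ v) (Ioi 0)) : 0 ≤ ∫ x in Ioi 0, hardyDefect κ v x := by
  have htail : ∀ δ > 0, 0 ≤ (∫ x in Ioi δ, hardyDefect κ v x) + hardyWeight κ δ * v δ ^ 2 := by
    intro δ hδ
    refine ge_of_tendsto (intervalIntegral_tendsto_integral_Ioi δ
      (hint.mono_set (Ioi_subset_Ioi hδ.le)) tendsto_id |>.add_const _) ?_
    filter_upwards [eventually_ge_atTop δ] with b hb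
    have := sub_le_integral_hardyDefect hκ hv hδ hb
      (hint.mono_set (Icc_subset_Ioi_iff hb |>.mpr hδ))
    rw [id]
    nlinarith [hardyWeight_pos hκ (hδ.trans_le hb), sq_nonneg (v b)]
  have hlim : Tendsto (fun δ => (∫ x in Ioi δ, hardyDefect κ v x) + hardyWeight κ δ * v δ ^ 2)
      (𝓝[>] 0) (𝓝 ((∫ x in Ioi 0, hardyDefect κ v x) + 0)) :=
    (hint.continuousWithinAt_Ici_primitive_Ioi.mono Ioi_subset_Ici_self).tendsto.add
      (tendsto_hardyWeight_mul_sq hκ (hv 0) hv0)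
  simpa using ge_of_tendsto hlim (eventually_nhdsWithin_of_forall htail)

lemma hardyDefect_comp_neg (x : ℝ) : hardyDefect κ (fun y => v (-y)) x = hardyDefect κ v (-x) := by
  simp only [hardyDefect, deriv_comp_neg, neg_sq, mul_neg, cosh_neg]

theorem hardy_inequality_sech (hκ : 0 < κ) (hv : Differentiable ℝ v) (hv0 : v 0 = 0)
    (hv2 : Integrable fun x => v x ^ 2) (hdv2 : Integrable fun x => deriv v x ^ 2) :
    2 * κ ^ 2 * ∫ x, (1 / cosh (κ * x)) ^ 2 * v x ^ 2 ≤ ∫ x, deriv v x ^ 2 := by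
  have hweighted : Integrable fun x => (1 / cosh (κ * x)) ^ 2 * v x ^ 2 :=
    integrable_sech_sq_mul hv2
  have hdefect : Integrable (hardyDefect κ v) := hdv2.sub (hweighted.const_mul _)
  have hneg : 0 ≤ ∫ x in Iic 0, hardyDefect κ v x := by
    have hreflected := integral_Ioi_hardyDefect_nonneg (v := fun y => v (-y)) hκ
      (hv.comp differentiable_neg) (by simpa using hv0)
      (by rw [funext hardyDefect_comp_neg]; exact hdefect.comp_neg.integrableOn)
    have hchange := integral_comp_neg_Iic 0 (hardyDefect κ fun y => v (-y))
    simp only [hardyDefect_comp_neg, neg_neg, neg_zero] at hreflected hchange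
    linarith
  have hsplit := intervalIntegral.integral_Iic_add_Ioi hdefect.integrableOn hdefect.integrableOn
    (b := 0)
  have htotal : ∫ x, hardyDefect κ v x
      = (∫ x, deriv v x ^ 2) - 2 * κ ^ 2 * ∫ x, (1 / cosh (κ * x)) ^ 2 * v x ^ 2 := by
    simp only [hardyDefect]
    rw [integral_sub hdv2 (hweighted.const_mul _), integral_const_mul]
  linarith [integral_Ioi_hardyDefect_nonneg hκ hv hv0 hdefect.integrableOn]

end Hardy

lemma abs_mul_le_of_abs_le_exp {f : ℝ → ℝ} {C a : ℝ} (hC : 0 ≤ C) (ha : 0 < a)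
    (hf : ∀ x, |f x| ≤ C * exp (-a * |x|)) (x : ℝ) : |x * f x| ≤ C / a := by
  have hdecay : a * |x| * exp (-(a * |x|)) ≤ 1 :=
    (mul_exp_neg_le_exp_neg_one _).trans (exp_le_one_iff.mpr (by norm_num))
  calc |x * f x| = |x| * |f x| := abs_mul _ _
    _ ≤ |x| * (C * exp (-a * |x|)) := mul_le_mul_of_nonneg_left (hf x) (abs_nonneg x)
    _ = C / a * (a * |x| * exp (-(a * |x|))) := by field_simp
    _ ≤ C / a := mul_le_of_le_one_right (by positivity) hdecay

lemma abs_le_mul_sech_sq_of_abs_le {q ε c t : ℝ} (hε : 0 ≤ ε) (hεc : ε ≤ c)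
    (hq : |q| ≤ ε * (1 / cosh t) ^ 4) : |q| ≤ c * (1 / cosh t) ^ 2 := by
  have hpow : (1 / cosh t) ^ 4 ≤ (1 / cosh t) ^ 2 :=
    pow_le_pow_of_le_one (by positivity) (one_div_cosh_le_one t) (by norm_num)
  calc |q| ≤ ε * (1 / cosh t) ^ 2 := hq.trans (mul_le_mul_of_nonneg_left hpow hε)
    _ ≤ c * (1 / cosh t) ^ 2 := mul_le_mul_of_nonneg_right hεc (by positivity)

lemma neg_integral_mul_sq_le {κ c : ℝ} {q v : ℝ → ℝ} (hqv : Integrable fun x => q x * v x ^ 2)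
    (hv2 : Integrable fun x => v x ^ 2) (hq : ∀ x, |q x| ≤ c * (1 / cosh (κ * x)) ^ 2) :
    -∫ x, q x * v x ^ 2 ≤ c * ∫ x, (1 / cosh (κ * x)) ^ 2 * v x ^ 2 := by
  rw [← integral_neg, ← integral_const_mul]
  refine integral_mono hqv.neg ((integrable_sech_sq_mul hv2).const_mul _) fun x => ?_
  nlinarith [neg_abs_le (q x), mul_le_mul_of_nonneg_right (hq x) (sq_nonneg (v x))]

/-- Stability of the repulsivity condition (Hypothesis 3) under small perturbations:
if (1−γ)∫(v')² ≥ −(1/2)∫ x P₂' v² for all odd v ∈ H¹, |P₂'| ≤ C e^{−10κ|x|}, and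
|xQ(x)| ≤ ε sech⁴(κx) with ε ≤ γ·2κ², then (1−γ/2)∫(v')² ≥ −(1/2)∫ x(P₂'+Q) v². -/
theorem repulsivity_stability (γ κ C ε : ℝ) (P₂' Q : ℝ → ℝ)
    (hγ : γ ∈ Set.Ioo (0 : ℝ) 1) (hκ : 0 < κ) (hC : 0 < C)
    (hPcont : Continuous P₂')
    (hPdec : ∀ x, |P₂' x| ≤ C * Real.exp (-(5 * (2 * κ)) * |x|))
    (hrep : ∀ v : ℝ → ℝ, Differentiable ℝ v → (∀ x, v (-x) = -v x) →
      Integrable (fun x => (v x) ^ 2) → Integrable (fun x => (deriv v x) ^ 2) →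
      (1 - γ) * ∫ x, (deriv v x) ^ 2 ≥ -(1 / 2) * ∫ x, x * P₂' x * (v x) ^ 2)
    (hQcont : Continuous Q) (hε : 0 < ε)
    (hQbd : ∀ x, |x * Q x| ≤ ε * (1 / Real.cosh (κ * x)) ^ 4)
    (hεsmall : ε ≤ γ * (2 * κ ^ 2)) :
    ∀ v : ℝ → ℝ, Differentiable ℝ v → (∀ x, v (-x) = -v x) →
      Integrable (fun x => (v x) ^ 2) → Integrable (fun x => (deriv v x) ^ 2) →
      (1 - γ / 2) * ∫ x, (deriv v x) ^ 2
        ≥ -(1 / 2) * ∫ x, x * (P₂' x + Q x) * (v x) ^ 2 := by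
  intro v hv hodd hv2 hdv2
  have hP : Integrable fun x => x * P₂' x * v x ^ 2 :=
    hv2.bdd_mul (continuous_id.mul hPcont).aestronglyMeasurable
      (ae_of_all _ (abs_mul_le_of_abs_le_exp hC.le (by positivity) hPdec))
  have hQpt (x : ℝ) : |x * Q x| ≤ γ * (2 * κ ^ 2) * (1 / cosh (κ * x)) ^ 2 :=
    abs_le_mul_sech_sq_of_abs_le hε.le hεsmall (hQbd x)
  have hQ : Integrable fun x => x * Q x * v x ^ 2 :=
    hv2.bdd_mul (continuous_id.mul hQcont).aestronglyMeasurable (ae_of_all _ fun x =>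
      (hQpt x).trans (mul_le_of_le_one_right (hε.le.trans hεsmall)
        (pow_le_one₀ (by positivity) (one_div_cosh_le_one _))))
  have hv0 : v 0 = 0 := by
    have := hodd 0
    rw [neg_zero] at this
    linarith
  have hQsmall : -∫ x, x * Q x * v x ^ 2 ≤ γ * ∫ x, deriv v x ^ 2 :=
    calc -∫ x, x * Q x * v x ^ 2
        ≤ γ * (2 * κ ^ 2) * ∫ x, (1 / cosh (κ * x)) ^ 2 * v x ^ 2 :=
          neg_integral_mul_sq_le hQ hv2 hQpt
      _ ≤ γ * ∫ x, deriv v x ^ 2 := by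
          rw [mul_assoc]
          exact mul_le_mul_of_nonneg_left (hardy_inequality_sech hκ hv hv0 hv2 hdv2) hγ.1.le
  have hsplit : ∫ x, x * (P₂' x + Q x) * v x ^ 2
      = (∫ x, x * P₂' x * v x ^ 2) + ∫ x, x * Q x * v x ^ 2 := by
    rw [← integral_add hP hQ]
    congr 1 with x
    ring
  linarith [hrep v hv hodd hv2 hdv2]
end
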